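/- arXiv:2303.00407 — 3 statements merged into one kernel-verified Lean document; each statement's English description precedes it below -/
import Mathlib

section
/- Let R be an integral domain with fraction field K, I ⊆ R an ideal, and x ∈ R. Then x is integral over the ideal I if and only if for every valuation subring V of K containing R one has x ∈ I·V (the extension of I to V). -/
/-- `x` is integral over the ideal `I`: it satisfies a monic equation
`x^n + a_1 x^{n-1} + ... + a_n = 0` with `a_i ∈ I^i`. -/
def IsIntegralOverIdeal {A : Type*} [CommRing A] (I : Ideal A) (s : A) : Prop :=
  ∃ n : ℕ, 0 < n ∧ ∃ a : ℕ → A, (∀ i ∈ Finset.Icc 1 n, a i ∈ I ^ i) ∧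
    s ^ n + ∑ i ∈ Finset.Icc 1 n, a i * s ^ (n - i) = 0

/-! If `x` is integral over `I` and `V ⊇ R` is a valuation ring with `x ∉ IV`, then any two
elements of `V` are comparable under divisibility, so `IV ⊆ 𝔪_V x`; the integral equation then
puts `xⁿ` in `𝔪_V xⁿ`, and Nakayama forces `x = 0`, a contradiction.

Conversely, if `x` is not integral over `I`, the ideal `(I/x)` of the blowup algebra `R[I/x] ⊆ K`
is proper: clearing denominators in `1 ∈ (I/x)` gives an equation of integral dependence. A
valuation subring `V` of `K` dominating `R[I/x]` at a maximal ideal containing `(I/x)` then has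
`I/x ⊆ 𝔪_V`, so `IV ⊆ 𝔪_V x`, and `x ∈ IV` would again give `x = 0`. -/

open Ideal IsLocalRing Finset

namespace Ideal

section BlowupNumerators

variable {A : Type*} [CommRing A] (I : Ideal A) (s : A)

def blowupNumerators (k n : ℕ) : Ideal A :=
  ⨆ i ∈ Icc k n, I ^ i * span {s ^ (n - i)}

variable {I s}

theorem mul_pow_sub_mem_blowupNumerators {k i n : ℕ} (hki : k ≤ i) (hin : i ≤ n) {a : A}
    (ha : a ∈ I ^ i) : a * s ^ (n - i) ∈ I.blowupNumerators s k n :=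
  le_iSup₂ (f := fun i _ => I ^ i * span {s ^ (n - i)}) i (mem_Icc.2 ⟨hki, hin⟩)
    (mul_mem_mul ha (mem_span_singleton_self _))

theorem blowupNumerators_mul_le (k l m n : ℕ) :
    I.blowupNumerators s k m * I.blowupNumerators s l n ≤
      I.blowupNumerators s (k + l) (m + n) := by
  simp only [blowupNumerators, iSup_mul, mul_iSup]
  refine iSup₂_le fun j hj => iSup₂_le fun i hi => ?_
  obtain ⟨hki, him⟩ := mem_Icc.1 hi
  obtain ⟨hlj, hjn⟩ := mem_Icc.1 hj
  refine le_iSup₂_of_le (i + j) (mem_Icc.2 ⟨by omega, by omega⟩) (le_of_eq ?_)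
  have hexp : m + n - (i + j) = (m - i) + (n - j) := by omega
  rw [hexp, pow_add, pow_add, ← span_singleton_mul_span_singleton]
  ring

theorem pow_mem_blowupNumerators_zero (n : ℕ) : s ^ n ∈ I.blowupNumerators s 0 n := by
  simpa using mul_pow_sub_mem_blowupNumerators (I := I) (s := s) le_rfl (Nat.zero_le n)
    (a := 1) (by simp)

theorem mul_pow_mem_blowupNumerators {k m : ℕ} {b : A} (hb : b ∈ I.blowupNumerators s k m)
    (n : ℕ) : b * s ^ n ∈ I.blowupNumerators s k (m + n) :=
  blowupNumerators_mul_le k 0 m n (mul_mem_mul hb (pow_mem_blowupNumerators_zero n))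

theorem blowupNumerators_le_mul_span_pow {J 𝔪 : Ideal A} (h : J ≤ 𝔪 * span {s}) {k : ℕ}
    (hk : 0 < k) (n : ℕ) : J.blowupNumerators s k n ≤ 𝔪 * span {s ^ n} := by
  refine iSup₂_le fun i hi => ?_
  obtain ⟨hki, hin⟩ := mem_Icc.1 hi
  calc J ^ i * span {s ^ (n - i)} ≤ (𝔪 * span {s}) ^ i * span {s ^ (n - i)} :=
        mul_mono_left (pow_right_mono h i)
    _ = 𝔪 ^ i * span {s ^ n} := by
        rw [mul_pow, span_singleton_pow, mul_assoc, span_singleton_mul_span_singleton, ← pow_add,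
          Nat.add_sub_cancel' hin]
    _ ≤ 𝔪 * span {s ^ n} := mul_mono_left (pow_le_self (by omega))

end BlowupNumerators

end Ideal

section IntegralOverIdeal

variable {A : Type*} [CommRing A] {I : Ideal A} {s : A}

theorem isIntegralOverIdeal_iff_exists_pow_mem_blowupNumerators :
    IsIntegralOverIdeal I s ↔ ∃ n, 0 < n ∧ s ^ n ∈ I.blowupNumerators s 1 n := by
  constructor
  · rintro ⟨n, hn, a, ha, heq⟩
    refine ⟨n, hn, ?_⟩
    rw [eq_neg_of_add_eq_zero_left heq]
    exact neg_mem (Submodule.sum_mem_biSup fun i hi =>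
      mul_mem_mul (ha i hi) (mem_span_singleton_self _))
  · rintro ⟨n, hn, hs⟩
    obtain ⟨μ, hμ⟩ := (Submodule.mem_iSup_finset_iff_exists_sum _ _).1 hs
    choose c hc hcμ using fun i => mem_mul_span_singleton.1 (μ i).2
    refine ⟨n, hn, fun i => -c i, fun i _ => neg_mem (hc i), ?_⟩
    simp only [neg_mul, sum_neg_distrib, hcμ, hμ, add_neg_cancel]

theorem isIntegralOverIdeal_zero (I : Ideal A) : IsIntegralOverIdeal I 0 :=
  ⟨1, one_pos, 0, by simp, by simp⟩

theorem IsIntegralOverIdeal.map {B : Type*} [CommRing B] (f : A →+* B)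
    (h : IsIntegralOverIdeal I s) : IsIntegralOverIdeal (I.map f) (f s) := by
  obtain ⟨n, hn, a, ha, heq⟩ := h
  refine ⟨n, hn, f ∘ a, fun i hi => ?_, by simpa using congrArg f heq⟩
  rw [← Ideal.map_pow]
  exact mem_map_of_mem f (ha i hi)

theorem IsLocalRing.eq_zero_of_mem_maximalIdeal_mul_span_singleton [IsLocalRing A]
    (hs : s ∈ maximalIdeal A * span {s}) : s = 0 := by
  obtain ⟨m, hm, hms⟩ := mem_mul_span_singleton.1 hs
  exact (isUnit_one_sub_self_of_mem_nonunits m hm).mul_right_eq_zero.1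
    (by rw [sub_mul, one_mul, hms, sub_self])

theorem IsIntegralOverIdeal.eq_zero_of_le_maximalIdeal_mul_span [IsLocalRing A] [IsReduced A]
    (h : IsIntegralOverIdeal I s) (hI : I ≤ maximalIdeal A * span {s}) : s = 0 := by
  obtain ⟨n, hn, hs⟩ := isIntegralOverIdeal_iff_exists_pow_mem_blowupNumerators.1 h
  exact IsNilpotent.eq_zero ⟨n, eq_zero_of_mem_maximalIdeal_mul_span_singleton
    (blowupNumerators_le_mul_span_pow hI one_pos n hs)⟩

end IntegralOverIdeal

namespace ValuationRing

variable {V : Type*} [CommRing V] [IsDomain V] [ValuationRing V]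

theorem le_maximalIdeal_mul_span_of_notMem {J : Ideal V} {y : V} (hy : y ∉ J) :
    J ≤ maximalIdeal V * span {y} := by
  intro b hb
  rcases dvd_total y b with ⟨m, rfl⟩ | ⟨c, rfl⟩
  · have hm : m ∈ maximalIdeal V := fun ⟨u, hu⟩ =>
      hy (by simpa [← hu] using J.mul_mem_right (↑u⁻¹ : V) hb)
    exact mem_mul_span_singleton.2 ⟨m, hm, mul_comm m y⟩
  · exact absurd (J.mul_mem_right c hb) hy

theorem mem_of_isIntegralOverIdeal {J : Ideal V} {y : V} (h : IsIntegralOverIdeal J y) :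
    y ∈ J := by
  by_contra hy
  exact hy (h.eq_zero_of_le_maximalIdeal_mul_span (le_maximalIdeal_mul_span_of_notMem hy) ▸
    J.zero_mem)

end ValuationRing

section Blowup

variable {R K : Type*} [CommRing R] [Field K] [Algebra R K] (I : Ideal R) (x : R)

/-- The fractions `b / xⁿ` with `b ∈ ∑_{i=k}^n Iⁱ x^{n-i}`, that is `(I/x)ᵏ R[I/x]`. -/
def blowupSubmodule (k : ℕ) : Submodule R K where
  carrier := {t | ∃ n, ∃ b ∈ I.blowupNumerators x k n,
    t * algebraMap R K x ^ n = algebraMap R K b}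
  add_mem' := by
    rintro t u ⟨m, b, hb, hbt⟩ ⟨n, c, hc, hcu⟩
    refine ⟨m + n, b * x ^ n + c * x ^ m, add_mem (mul_pow_mem_blowupNumerators hb n)
      (add_comm n m ▸ mul_pow_mem_blowupNumerators hc m), ?_⟩
    rw [map_add, map_mul, map_mul, map_pow, map_pow, ← hbt, ← hcu]
    ring
  zero_mem' := ⟨0, 0, zero_mem _, by simp⟩
  smul_mem' := by
    rintro r t ⟨n, b, hb, hbt⟩
    exact ⟨n, r * b, mul_mem_left _ r hb, by rw [Algebra.smul_def, mul_assoc, hbt, map_mul]⟩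

variable {I x}

theorem mul_mem_blowupSubmodule {k l : ℕ} {t u : K} (ht : t ∈ blowupSubmodule I x k)
    (hu : u ∈ blowupSubmodule I x l) : t * u ∈ blowupSubmodule I x (k + l) := by
  obtain ⟨m, b, hb, hbt⟩ := ht
  obtain ⟨n, c, hc, hcu⟩ := hu
  refine ⟨m + n, b * c, blowupNumerators_mul_le k l m n (mul_mem_mul hb hc), ?_⟩
  rw [map_mul, ← hbt, ← hcu, pow_add]
  ring

theorem div_mem_blowupSubmodule (hx : algebraMap R K x ≠ 0) {k : ℕ} (hk : k ≤ 1) {a : R}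
    (ha : a ∈ I) : algebraMap R K a / algebraMap R K x ∈ blowupSubmodule I x k :=
  ⟨1, a, by simpa using mul_pow_sub_mem_blowupNumerators (s := x) hk le_rfl (by rwa [pow_one]),
    by rw [pow_one, div_mul_cancel₀ _ hx]⟩

theorem one_mem_blowupSubmodule_zero : (1 : K) ∈ blowupSubmodule I x 0 := by
  refine ⟨0, 1, ?_, by simp⟩
  simpa using pow_mem_blowupNumerators_zero (I := I) (s := x) 0

variable (I x)

def blowupAlgebra : Subalgebra R K :=
  (blowupSubmodule I x 0).toSubalgebra one_mem_blowupSubmodule_zero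
    fun _ _ ht hu => mul_mem_blowupSubmodule (k := 0) (l := 0) ht hu

def blowupIdeal : Ideal (blowupAlgebra (K := K) I x) where
  carrier := {t | (t : K) ∈ blowupSubmodule I x 1}
  add_mem' ht hu := (blowupSubmodule I x 1).add_mem ht hu
  zero_mem' := (blowupSubmodule I x 1).zero_mem
  smul_mem' t _ hu := by simpa using mul_mem_blowupSubmodule (k := 0) (l := 1) t.2 hu

variable {I x}

theorem mem_blowupIdeal {t : blowupAlgebra (K := K) I x} :
    t ∈ blowupIdeal I x ↔ (t : K) ∈ blowupSubmodule I x 1 :=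
  Iff.rfl

theorem blowupIdeal_ne_top (hinj : Function.Injective (algebraMap R K))
    (hx : ¬IsIntegralOverIdeal I x) : blowupIdeal (K := K) I x ≠ ⊤ := by
  intro htop
  obtain ⟨n, b, hb, hbx⟩ := mem_blowupIdeal.1 ((eq_top_iff_one _).1 htop)
  have hxn : x ^ n = b := hinj (by simpa using hbx)
  refine hx (isIntegralOverIdeal_iff_exists_pow_mem_blowupNumerators.2 ⟨n + 1, n.succ_pos, ?_⟩)
  simpa [pow_succ, hxn] using mul_pow_mem_blowupNumerators hb 1

end Blowup

theorem ValuationSubring.exists_le_valuation_lt_one_of_ne_top {K : Type*} [Field K]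
    {S : Subring K} {𝔞 : Ideal S} (h𝔞 : 𝔞 ≠ ⊤) :
    ∃ V : ValuationSubring K, S ≤ V.toSubring ∧ ∀ s ∈ 𝔞, V.valuation (s : K) < 1 := by
  obtain ⟨M, hM, h𝔞M⟩ := exists_le_maximal 𝔞 h𝔞
  have := hM.isPrime
  obtain ⟨V, hSV, hloc⟩ := (LocalSubring.ofPrime S M).exists_le_valuationSubring
  refine ⟨V, (LocalSubring.le_ofPrime S M).trans hSV, fun s hs => ?_⟩
  refine (V.valuation_lt_one_iff ⟨s, hSV (LocalSubring.le_ofPrime S M s.2)⟩).1 fun hunit => ?_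
  have hunit' := hloc.map_nonunit (Subring.inclusion (LocalSubring.le_ofPrime S M) s) hunit
  exact (IsLocalization.AtPrime.isUnit_to_map_iff _ M s).1 hunit' (h𝔞M hs)

theorem exists_valuationSubring_notMem_map_of_not_isIntegralOverIdeal
    {R K : Type*} [CommRing R] [Field K] [Algebra R K]
    (hinj : Function.Injective (algebraMap R K)) {I : Ideal R} {x : R}
    (hx : ¬IsIntegralOverIdeal I x) :
    ∃ (V : ValuationSubring K) (h : ∀ r : R, algebraMap R K r ∈ V.toSubring),
      (algebraMap R K).codRestrict V.toSubring h x ∉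
        I.map ((algebraMap R K).codRestrict V.toSubring h) := by
  have hx0 : algebraMap R K x ≠ 0 := fun h0 =>
    hx (hinj (h0.trans (map_zero _).symm) ▸ isIntegralOverIdeal_zero I)
  obtain ⟨V, hSV, hV⟩ :=
    ValuationSubring.exists_le_valuation_lt_one_of_ne_top (S := (blowupAlgebra I x).toSubring)
      (blowupIdeal_ne_top hinj hx)
  have hRV (r : R) : algebraMap R K r ∈ V.toSubring := hSV ((blowupAlgebra I x).algebraMap_mem r)
  set f := (algebraMap R K).codRestrict V.toSubring hRV
  have hle : I.map f ≤ maximalIdeal V * span {f x} := by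
    refine map_le_iff_le_comap.2 fun a ha => ?_
    have haS : algebraMap R K a / algebraMap R K x ∈ blowupAlgebra I x :=
      div_mem_blowupSubmodule hx0 zero_le_one ha
    refine mem_mul_span_singleton.2 ⟨⟨_, hSV haS⟩, (V.valuation_lt_one_iff _).2
      (hV ⟨_, haS⟩ (mem_blowupIdeal.2 (div_mem_blowupSubmodule hx0 le_rfl ha))), ?_⟩
    exact Subtype.ext (div_mul_cancel₀ _ hx0)
  refine ⟨V, hRV, fun hmem => ?_⟩
  exact hx0 (congrArg Subtype.val (eq_zero_of_mem_maximalIdeal_mul_span_singleton (hle hmem)))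

theorem integral_over_ideal_iff_mem_extension_to_valuation_subrings_general
    {R K : Type*} [CommRing R] [Field K] [Algebra R K]
    [IsFractionRing R K] (I : Ideal R) (x : R) :
    IsIntegralOverIdeal I x ↔
      ∀ (V : ValuationSubring K) (h : ∀ r : R, algebraMap R K r ∈ V.toSubring),
        ((algebraMap R K).codRestrict V.toSubring h) x ∈
          Ideal.map ((algebraMap R K).codRestrict V.toSubring h) I := by
  refine ⟨fun hx V h => ?_, fun H => ?_⟩
  · have : ValuationRing V.toSubring := inferInstanceAs (ValuationRing V)
    exact ValuationRing.mem_of_isIntegralOverIdeal (hx.map _)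
  · by_contra hx
    obtain ⟨V, h, hV⟩ := exists_valuationSubring_notMem_map_of_not_isIntegralOverIdeal
      (IsFractionRing.injective R K) hx
    exact hV (H V h)

theorem integral_over_ideal_iff_mem_extension_to_valuation_subrings
    {R K : Type*} [CommRing R] [IsDomain R] [Field K] [Algebra R K]
    [IsFractionRing R K] (I : Ideal R) (x : R) :
    IsIntegralOverIdeal I x ↔
      ∀ (V : ValuationSubring K) (h : ∀ r : R, algebraMap R K r ∈ V.toSubring),
        ((algebraMap R K).codRestrict V.toSubring h) x ∈
          Ideal.map ((algebraMap R K).codRestrict V.toSubring h) I :=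
  integral_over_ideal_iff_mem_extension_to_valuation_subrings_general I x
end

section
/- Let k be a field of characteristic zero and let I be an ideal of k[x_1, ..., x_n] that is stable under the Euler-type operators x_i·∂/∂x_i for all i, i.e. x_i·(∂f/∂x_i) ∈ I for every f ∈ I and every i. Then I is a monomial ideal: I is generated by the monomials it contains; equivalently, whenever f ∈ I, every monomial x^a appearing in f with nonzero coefficient lies in I. -/
/-! The Euler operators `X i * pderiv i` act diagonally on monomials: `x^c` is an eigenvector of
`X i * pderiv i` with eigenvalue `c i`. Given `f ∈ I` with two monomials `x^a ≠ x^b` in its support,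
pick `i` with `a i ≠ b i`; then `X i * pderiv i f - b i • f ∈ I` kills the `x^b`-term and, since
the characteristic is zero, keeps the `x^a`-term. Induction on the size of the support isolates
`x^a` in an element of `I`. -/

open MvPolynomial

namespace MvPolynomial

variable {σ R K : Type*}

theorem coeff_X_mul_pderiv [CommSemiring R] (i : σ) (f : MvPolynomial σ R) (c : σ →₀ ℕ) :
    coeff c (X i * pderiv i f) = c i * coeff c f := by
  classical
  induction f using induction_on' with
  | monomial b r =>
    rw [X_mul_pderiv_monomial, coeff_smul, coeff_monomial]
    split_ifs with h
    · rw [h, nsmul_eq_mul]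
    · simp
  | add p q hp hq => rw [map_add, mul_add, coeff_add, coeff_add, hp, hq, mul_add]

theorem coeff_X_mul_pderiv_sub_smul [CommRing R] (i : σ) (f : MvPolynomial σ R) (r : R)
    (c : σ →₀ ℕ) : coeff c (X i * pderiv i f - r • f) = (c i - r) * coeff c f := by
  rw [coeff_sub, coeff_X_mul_pderiv, coeff_smul, smul_eq_mul, sub_mul]

theorem eq_span_monomials_of_forall_mem_support [CommSemiring R] {I : Ideal (MvPolynomial σ R)}
    (hI : ∀ f ∈ I, ∀ a ∈ f.support, monomial a (1 : R) ∈ I) :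
    I = Ideal.span {m | (∃ a, m = monomial a 1) ∧ m ∈ I} := by
  refine le_antisymm (fun f hf => ?_) (Ideal.span_le.2 fun m hm => hm.2)
  rw [f.as_sum]
  refine Ideal.sum_mem _ fun a ha => ?_
  rw [← mul_one (coeff a f), ← smul_eq_mul, ← smul_monomial]
  exact Submodule.smul_of_tower_mem _ _ (Ideal.subset_span ⟨⟨a, rfl⟩, hI f hf a ha⟩)

section Field

variable [Field K] {V : Submodule K (MvPolynomial σ K)}

theorem monomial_one_mem_of_support_eq_singleton {f : MvPolynomial σ K} (hf : f ∈ V)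
    {a : σ →₀ ℕ} (hsupp : f.support = {a}) : monomial a 1 ∈ V := by
  have hne : coeff a f ≠ 0 := mem_support_iff.1 (hsupp ▸ Finset.mem_singleton_self a)
  have hfa : f = monomial a (coeff a f) := by
    conv_lhs => rw [f.as_sum, hsupp, Finset.sum_singleton]
  set c := coeff a f
  have hmono : monomial a (1 : K) = c⁻¹ • f := by
    rw [hfa, smul_monomial, smul_eq_mul, inv_mul_cancel₀ hne]
  exact hmono ▸ V.smul_mem _ hf

theorem monomial_one_mem_of_mem_support [CharZero K]
    (hV : ∀ f ∈ V, ∀ i, X i * pderiv i f ∈ V) {f : MvPolynomial σ K} (hf : f ∈ V)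
    {a : σ →₀ ℕ} (ha : a ∈ f.support) : monomial a 1 ∈ V := by
  classical
  induction hcard : f.support.card using Nat.strong_induction_on generalizing f with
  | _ s ih =>
  by_cases hsupp : f.support = {a}
  · exact monomial_one_mem_of_support_eq_singleton hf hsupp
  obtain ⟨b, hb, hba⟩ : ∃ b ∈ f.support, b ≠ a := by
    by_contra! h
    exact hsupp (Finset.eq_singleton_iff_unique_mem.2 ⟨ha, h⟩)
  obtain ⟨i, hi⟩ := Finsupp.ne_iff.1 hba
  set g := X i * pderiv i f - (b i : K) • f with hg
  have hgV : g ∈ V := V.sub_mem (hV f hf i) (V.smul_mem _ hf)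
  have hgsupp : g.support ⊆ f.support.erase b := by
    intro c hc
    rw [mem_support_iff, hg, coeff_X_mul_pderiv_sub_smul] at hc
    refine Finset.mem_erase.2 ⟨?_, mem_support_iff.2 (right_ne_zero_of_mul hc)⟩
    rintro rfl
    exact hc (by rw [sub_self, zero_mul])
  have hag : a ∈ g.support := by
    rw [mem_support_iff, hg, coeff_X_mul_pderiv_sub_smul]
    exact mul_ne_zero (sub_ne_zero.2 (Nat.cast_injective.ne hi.symm)) (mem_support_iff.1 ha)
  have hlt : g.support.card < s :=
    hcard ▸ (Finset.card_le_card hgsupp).trans_lt (Finset.card_erase_lt_of_mem hb)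
  exact ih _ hlt hgV hag rfl

end Field

end MvPolynomial

theorem ideal_stable_under_euler_ops_is_monomial
    {k : Type*} [Field k] [CharZero k] {n : ℕ}
    (I : Ideal (MvPolynomial (Fin n) k))
    (hst : ∀ f ∈ I, ∀ i : Fin n, X i * pderiv i f ∈ I) :
    (∀ f ∈ I, ∀ a : Fin n →₀ ℕ, coeff a f ≠ 0 → (monomial a (1 : k)) ∈ I) ∧
    I = Ideal.span {m : MvPolynomial (Fin n) k |
      (∃ a : Fin n →₀ ℕ, m = monomial a 1) ∧ m ∈ I} := by
  have hmem : ∀ f ∈ I, ∀ a ∈ f.support, monomial a (1 : k) ∈ I := fun _ hf _ ha =>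
    monomial_one_mem_of_mem_support (V := I.restrictScalars k) hst hf ha
  exact ⟨fun f hf a ha => hmem f hf a (mem_support_iff.2 ha),
    eq_span_monomials_of_forall_mem_support hmem⟩
end

section
/- Let k be a field and n ≥ 1 a natural number. The quotient ring k[x,y,z]/(xz − y^n) is isomorphic, as a k-algebra, to the k-subalgebra of the localization k[x,y][1/x] generated by x, y, and y^n/x. Concretely, the k-algebra map k[x,y,z] → k[x,y][1/x] sending x ↦ x, y ↦ y, z ↦ y^n/x has kernel exactly the ideal (xz − y^n). -/
/-!
Identify `k[x,y,z]` with `A[z]`, `A = k[x,y]`. Since `xz ≡ y^n` modulo `xz - y^n`, every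
`p ∈ A[z]` satisfies `x^d p ≡ g` for some `d` and some constant `g ∈ A`. If `p(y^n/x) = 0`
then `g` maps to `0` in `A[1/x]`, so `g = 0` as `A` is a domain; thus `xz - y^n ∣ x^d p`, and the
factor `x^d` cancels because `y^n` is a nonzerodivisor modulo `x`.
-/

namespace Polynomial

variable {A : Type*} [CommRing A]

theorem exists_C_mul_X_sub_C_dvd_C_pow_mul_sub_C (a b : A) (p : A[X]) :
    ∃ (d : ℕ) (g : A), C a * X - C b ∣ C a ^ d * p - C g := by
  induction p using Polynomial.induction_on with
  | C c => exact ⟨0, c, by simp⟩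
  | add p q hp hq =>
    obtain ⟨d₁, g₁, hg₁⟩ := hp
    obtain ⟨d₂, g₂, hg₂⟩ := hq
    refine ⟨d₁ + d₂, a ^ d₂ * g₁ + a ^ d₁ * g₂, ?_⟩
    have key : C a ^ (d₁ + d₂) * (p + q) - C (a ^ d₂ * g₁ + a ^ d₁ * g₂) =
        C a ^ d₂ * (C a ^ d₁ * p - C g₁) + C a ^ d₁ * (C a ^ d₂ * q - C g₂) := by
      simp only [map_add, map_mul, map_pow]; ring
    rw [key]
    exact dvd_add (hg₁.mul_left _) (hg₂.mul_left _)
  | monomial m c ih =>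
    obtain ⟨d, g, hg⟩ := ih
    refine ⟨d + 1, b * g, ?_⟩
    have key : C a ^ (d + 1) * (C c * X ^ (m + 1)) - C (b * g) =
        C a * X * (C a ^ d * (C c * X ^ m) - C g) + C g * (C a * X - C b) := by
      simp only [map_mul]; ring
    rw [key]
    exact dvd_add (hg.mul_left _) (dvd_mul_left _ _)

variable [IsDomain A] {a b : A}

theorem C_mul_X_sub_C_dvd_of_dvd_C_mul (ha : a ≠ 0) (hb : ∀ r, a ∣ b * r → a ∣ r)
    {q : A[X]} (h : C a * X - C b ∣ C a * q) : C a * X - C b ∣ q := by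
  obtain ⟨r, hr⟩ := h
  have hCa : C a ∣ r := by
    refine (C_dvd_iff_dvd_coeff _ _).2 fun i => hb _ ?_
    have : C b * r = C a * (X * r - q) := by rw [mul_sub, hr]; ring
    rw [← coeff_C_mul, this, coeff_C_mul]
    exact dvd_mul_right _ _
  obtain ⟨s, rfl⟩ := hCa
  refine ⟨s, mul_left_cancel₀ (C_ne_zero.2 ha) ?_⟩
  rw [hr]; ring

theorem C_mul_X_sub_C_dvd_of_dvd_C_pow_mul (ha : a ≠ 0) (hb : ∀ r, a ∣ b * r → a ∣ r)
    {q : A[X]} (d : ℕ) (h : C a * X - C b ∣ C a ^ d * q) : C a * X - C b ∣ q := by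
  induction d with
  | zero => simpa using h
  | succ d ih =>
    exact ih (C_mul_X_sub_C_dvd_of_dvd_C_mul ha hb (by rwa [pow_succ', mul_assoc] at h))

theorem ker_aeval_algebraMap_mul_invSelf {L : Type*} [CommRing L] [Algebra A L]
    [IsLocalization.Away a L] (ha : a ≠ 0) (hb : ∀ r, a ∣ b * r → a ∣ r) :
    RingHom.ker (aeval (algebraMap A L b * IsLocalization.Away.invSelf a)) =
      Ideal.span {C a * X - C b} := by
  have hroot : aeval (algebraMap A L b * IsLocalization.Away.invSelf a) (C a * X - C b) = 0 := by
    simp only [map_sub, map_mul, aeval_C, aeval_X]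
    rw [mul_left_comm, IsLocalization.Away.mul_invSelf, mul_one, sub_self]
  refine le_antisymm (fun p hp => ?_) ((Ideal.span_singleton_le_iff_mem _).2 hroot)
  obtain ⟨d, g, q, hq⟩ := exists_C_mul_X_sub_C_dvd_C_pow_mul_sub_C a b p
  have hg : g = 0 := by
    have := congrArg (aeval (algebraMap A L b * IsLocalization.Away.invSelf a)) hq
    rw [map_sub, map_mul, (RingHom.mem_ker).1 hp, map_mul, hroot, aeval_C] at this
    refine IsLocalization.injective L (powers_le_nonZeroDivisors_of_noZeroDivisors ha) ?_
    simpa using this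
  rw [hg, map_zero, sub_zero] at hq
  exact Ideal.mem_span_singleton.2 (C_mul_X_sub_C_dvd_of_dvd_C_pow_mul ha hb d ⟨q, hq⟩)

end Polynomial

open MvPolynomial

namespace MvPolynomial

theorem X_dvd_of_dvd_X_pow_mul {σ R : Type*} [CommRing R] [IsDomain R] {i j : σ}
    (hij : i ≠ j) (n : ℕ) {r : MvPolynomial σ R} (h : X i ∣ X j ^ n * r) : X i ∣ r :=
  ((X_prime (R := R) (i := i)).dvd_or_dvd h).resolve_left fun hdvd =>
    hij (X_dvd_X.1 ((X_prime).dvd_of_dvd_pow hdvd))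

variable (R : Type*) [CommSemiring R] (n : ℕ)

noncomputable def lastVarEquiv :
    MvPolynomial (Fin (n + 1)) R ≃ₐ[R] Polynomial (MvPolynomial (Fin n) R) :=
  (renameEquiv R finSuccEquivLast).trans (optionEquivLeft R (Fin n))

variable {R n}

@[simp]
theorem lastVarEquiv_X_castSucc (i : Fin n) :
    lastVarEquiv R n (X i.castSucc) = Polynomial.C (X i) := by
  simp [lastVarEquiv]

@[simp]
theorem lastVarEquiv_X_last : lastVarEquiv R n (X (Fin.last n)) = Polynomial.X := by
  simp [lastVarEquiv]

end MvPolynomial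

theorem kernel_of_An_chart_map_general
    {k : Type*} [Field k] (n : ℕ) :
    RingHom.ker (MvPolynomial.aeval
        (![algebraMap (MvPolynomial (Fin 2) k) _ (X 0),
           algebraMap (MvPolynomial (Fin 2) k) _ (X 1),
           algebraMap (MvPolynomial (Fin 2) k) _ (X 1 ^ n) *
             IsLocalization.Away.invSelf
               (S := Localization.Away (X 0 : MvPolynomial (Fin 2) k))
               (X 0 : MvPolynomial (Fin 2) k)] :
         Fin 3 → Localization.Away (X 0 : MvPolynomial (Fin 2) k)) :
      MvPolynomial (Fin 3) k →ₐ[k] Localization.Away (X 0 : MvPolynomial (Fin 2) k)) =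
    Ideal.span {(X 0 * X 2 - X 1 ^ n : MvPolynomial (Fin 3) k)} := by
  set e := lastVarEquiv k 2
  have hx : e (X 0) = Polynomial.C (X 0) := lastVarEquiv_X_castSucc 0
  have hy : e (X 1) = Polynomial.C (X 1) := lastVarEquiv_X_castSucc 1
  have hz : e (X 2) = Polynomial.X := lastVarEquiv_X_last
  set ψ := Polynomial.aeval (R := MvPolynomial (Fin 2) k)
    (algebraMap _ (Localization.Away (X 0 : MvPolynomial (Fin 2) k))
        (X 1 ^ n : MvPolynomial (Fin 2) k) *
      IsLocalization.Away.invSelf (X 0 : MvPolynomial (Fin 2) k))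
  have he : e (X 0 * X 2 - X 1 ^ n) =
      Polynomial.C (X 0) * Polynomial.X - Polynomial.C (X 1 ^ n) := by
    simp [hx, hy, hz]
  have key : RingHom.ker ((ψ.restrictScalars k).comp e.toAlgHom) =
      Ideal.span {(X 0 * X 2 - X 1 ^ n : MvPolynomial (Fin 3) k)} := by
    ext p
    rw [RingHom.mem_ker, AlgHom.comp_apply, AlgHom.restrictScalars_apply, ← RingHom.mem_ker,
      Polynomial.ker_aeval_algebraMap_mul_invSelf (X_ne_zero 0)
        (fun r => X_dvd_of_dvd_X_pow_mul (by decide) n), Ideal.mem_span_singleton,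
      Ideal.mem_span_singleton, ← he, AlgEquiv.coe_toAlgHom, map_dvd_iff]
  convert key using 2
  ext i; fin_cases i <;> simp [ψ, hx, hy, hz]

/-- The chart of the weighted blowing up of the plane along `(x, y^n)`: the map
`k[x,y,z] → k[x,y][1/x]`, `x ↦ x`, `y ↦ y`, `z ↦ y^n/x`, has kernel `(xz - y^n)`. -/
theorem kernel_of_An_chart_map
    {k : Type*} [Field k] (n : ℕ) (hn : 1 ≤ n) :
    RingHom.ker (MvPolynomial.aeval
        (![algebraMap (MvPolynomial (Fin 2) k) _ (X 0),
           algebraMap (MvPolynomial (Fin 2) k) _ (X 1),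
           algebraMap (MvPolynomial (Fin 2) k) _ (X 1 ^ n) *
             IsLocalization.Away.invSelf
               (S := Localization.Away (X 0 : MvPolynomial (Fin 2) k))
               (X 0 : MvPolynomial (Fin 2) k)] :
         Fin 3 → Localization.Away (X 0 : MvPolynomial (Fin 2) k)) :
      MvPolynomial (Fin 3) k →ₐ[k] Localization.Away (X 0 : MvPolynomial (Fin 2) k)) =
    Ideal.span {(X 0 * X 2 - X 1 ^ n : MvPolynomial (Fin 3) k)} :=
  kernel_of_An_chart_map_general n
end
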